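/- arXiv:2405.07173 — 2 statements merged into one kernel-verified Lean document; each statement's English description precedes it below -/
import Mathlib

section
/- (General fusion theorem) Let Π_1, ..., Π_k be independent Uniform(0,1) random variables, γ_c : [0,1]^k → ℝ continuous, and F the CDF of γ_c(U_1,...,U_k) for independent Uniform(0,1) variables U_1,...,U_k. Then the random variable Z = F(γ_c(Π_1,...,Π_k)) satisfies P(Z ≤ α) ≤ α for all α ∈ [0,1], and any random variable Ż with Ż ≥ Z pointwise also satisfies P(Ż ≤ α) ≤ α for all α ∈ [0,1]. -/
/-! The event `{F (g x) ≤ a}` is the preimage under `g` of a lower set of `ℝ`, hence an increasing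
union of the events `{g ≤ t}` with `F t ≤ a`, each of which has measure `F t ≤ a`; continuity from
below bounds the union by `a`. Independence and the uniform marginals identify the joint law of
`(Π_1, …, Π_k)` with the product of uniform laws, so `Z` is such a transform, and `Ż ≥ Z` only
shrinks the event. -/

open MeasureTheory ProbabilityTheory Set

lemma measure_preimage_of_isLowerSet {α : Type*} [MeasurableSpace α] (ν : Measure α)
    (g : α → ℝ) {A : Set ℝ} (hA : IsLowerSet A) :
    ν (g ⁻¹' A) = ⨆ t : A, ν {x | g x ≤ t} := by
  -- gives `A` the order topology, so that `atTop` on `A` is countably generated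
  have : A.OrdConnected := hA.ordConnected
  have hunion : g ⁻¹' A = ⋃ t : A, {x | g x ≤ t} := by
    ext x
    simp only [mem_preimage, mem_iUnion, mem_ofPred_eq, Subtype.exists, exists_prop]
    exact ⟨fun hx => ⟨g x, hx, le_rfl⟩, fun ⟨t, ht, hxt⟩ => hA hxt ht⟩
  rw [hunion]
  exact Monotone.measure_iUnion fun s t hst x (hx : g x ≤ s) => hx.trans hst

theorem measure_cdf_comp_le {α : Type*} [MeasurableSpace α] (ν : Measure α) [IsFiniteMeasure ν]
    (g : α → ℝ) (a : ℝ) :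
    ν {x | (ν {y | g y ≤ g x}).toReal ≤ a} ≤ ENNReal.ofReal a := by
  set F : ℝ → ℝ := fun t => (ν {y | g y ≤ t}).toReal
  have hF : Monotone F := fun s t hst =>
    ENNReal.toReal_mono (measure_ne_top _ _) (measure_mono fun y hy => le_trans hy hst)
  have hA : IsLowerSet {t | F t ≤ a} := fun s t hts hs => (hF hts).trans hs
  change ν (g ⁻¹' {t | F t ≤ a}) ≤ _
  rw [measure_preimage_of_isLowerSet ν g hA]
  refine iSup_le fun t => ?_
  rw [← ENNReal.ofReal_toReal (measure_ne_top ν {y | g y ≤ t})]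
  exact ENNReal.ofReal_le_ofReal t.2

lemma map_eq_uniform_of_measure_le_eq {Ω : Type*} [MeasurableSpace Ω] {μ : Measure Ω}
    [IsProbabilityMeasure μ] {X : Ω → ℝ} (hX : Measurable X)
    (hcdf : ∀ t ∈ Icc (0:ℝ) 1, μ {ω | X ω ≤ t} = ENNReal.ofReal t) :
    μ.map X = volume.restrict (Icc 0 1) := by
  refine Measure.ext_of_Iic _ _ fun t => ?_
  rw [Measure.map_apply hX measurableSet_Iic, Measure.restrict_apply measurableSet_Iic]
  have hinter : Iic t ∩ Icc 0 1 = Icc 0 (min t 1) := by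
    ext x; simp only [mem_inter_iff, mem_Iic, mem_Icc, le_min_iff]; tauto
  rw [hinter, Real.volume_Icc, sub_zero]
  change μ {ω | X ω ≤ t} = _
  rcases le_total t 1 with ht1 | ht1
  · rw [min_eq_left ht1]
    rcases le_total 0 t with ht0 | ht0
    · exact hcdf t ⟨ht0, ht1⟩
    · rw [ENNReal.ofReal_of_nonpos ht0, ← nonpos_iff_eq_zero]
      calc μ {ω | X ω ≤ t} ≤ μ {ω | X ω ≤ 0} := measure_mono fun ω (h : X ω ≤ t) => h.trans ht0
        _ = 0 := by simpa using hcdf 0 (by simp)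
  · rw [min_eq_right ht1, ENNReal.ofReal_one]
    refine le_antisymm prob_le_one ?_
    calc 1 = μ {ω | X ω ≤ 1} := by simpa using (hcdf 1 (by simp)).symm
      _ ≤ μ {ω | X ω ≤ t} := measure_mono fun ω (h : X ω ≤ 1) => h.trans ht1

theorem general_fusion_validity_general
    {Ω : Type*} [MeasurableSpace Ω] (μ : Measure Ω) [IsProbabilityMeasure μ]
    (k : ℕ) (P : Fin k → Ω → ℝ)
    (hmeas : ∀ i, Measurable (P i))
    (hindep : iIndepFun P μ)
    (hunif : ∀ i, ∀ t ∈ Set.Icc (0:ℝ) 1, μ {ω | P i ω ≤ t} = ENNReal.ofReal t)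
    (γ : (Fin k → ℝ) → ℝ)
    (F : ℝ → ℝ)
    (hF : ∀ t, F t =
      ((Measure.pi fun _ : Fin k => volume.restrict (Set.Icc (0:ℝ) 1))
        {x | γ x ≤ t}).toReal)
    (Zdot : Ω → ℝ)
    (hdom : ∀ ω, F (γ fun i => P i ω) ≤ Zdot ω) :
    (∀ α ∈ Set.Icc (0:ℝ) 1,
        μ {ω | F (γ fun i => P i ω) ≤ α} ≤ ENNReal.ofReal α) ∧
    (∀ α ∈ Set.Icc (0:ℝ) 1, μ {ω | Zdot ω ≤ α} ≤ ENNReal.ofReal α) := by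
  set π := Measure.pi fun _ : Fin k => volume.restrict (Icc (0:ℝ) 1)
  have hlaw : μ.map (fun ω i => P i ω) = π := by
    rw [hindep.map_fun_eq_pi_map fun i => (hmeas i).aemeasurable]
    exact congrArg Measure.pi (funext fun i => map_eq_uniform_of_measure_le_eq (hmeas i) (hunif i))
  have hZ : ∀ α, μ {ω | F (γ fun i => P i ω) ≤ α} ≤ ENNReal.ofReal α := fun α =>
    calc μ {ω | F (γ fun i => P i ω) ≤ α}
        ≤ μ.map (fun ω i => P i ω) {x | F (γ x) ≤ α} :=
          Measure.le_map_apply (measurable_pi_lambda _ hmeas).aemeasurable _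
      _ = π {x | F (γ x) ≤ α} := by rw [hlaw]
      _ ≤ ENNReal.ofReal α := by simpa only [hF] using measure_cdf_comp_le π γ α
  exact ⟨fun α _ => hZ α,
    fun α _ => (measure_mono fun ω hω => (hdom ω).trans hω).trans (hZ α)⟩

theorem general_fusion_validity
    {Ω : Type*} [MeasurableSpace Ω] (μ : Measure Ω) [IsProbabilityMeasure μ]
    (k : ℕ) (P : Fin k → Ω → ℝ)
    (hmeas : ∀ i, Measurable (P i))
    (hindep : iIndepFun P μ)
    (hunif : ∀ i, ∀ t ∈ Set.Icc (0:ℝ) 1, μ {ω | P i ω ≤ t} = ENNReal.ofReal t)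
    (γ : (Fin k → ℝ) → ℝ) (hγ : Continuous γ)
    (F : ℝ → ℝ)
    (hF : ∀ t, F t =
      ((Measure.pi fun _ : Fin k => volume.restrict (Set.Icc (0:ℝ) 1))
        {x | γ x ≤ t}).toReal)
    (Zdot : Ω → ℝ)
    (hdom : ∀ ω, F (γ fun i => P i ω) ≤ Zdot ω) :
    (∀ α ∈ Set.Icc (0:ℝ) 1,
        μ {ω | F (γ fun i => P i ω) ≤ α} ≤ ENNReal.ofReal α) ∧
    (∀ α ∈ Set.Icc (0:ℝ) 1, μ {ω | Zdot ω ≤ α} ≤ ENNReal.ofReal α) :=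
  general_fusion_validity_general μ k P hmeas hindep hunif γ F hF Zdot hdom
end

section
/- (Validity of necessity measures from a valid contour) Suppose π : Ω × Θ → [0,1] satisfies P(π(·,θ) ≤ α) ≤ α for all α ∈ [0,1] at the true θ. Define the necessity measure N_ω(A) = 1 − sup_{ϑ ∉ A} π(ω, ϑ) for A ⊆ Θ. Then for any A with θ ∉ A, P(N_·(A) ≥ 1 − α) ≤ α for all α ∈ [0,1]. -/
open MeasureTheory

theorem necessity_measure_validity
    {Ω Θ : Type*} [MeasurableSpace Ω] (μ : Measure Ω) [IsProbabilityMeasure μ]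
    (π : Ω → Θ → ℝ) (θ : Θ)
    (hrange : ∀ ω t, π ω t ∈ Set.Icc (0:ℝ) 1)
    (hval : ∀ α ∈ Set.Icc (0:ℝ) 1, μ {ω | π ω θ ≤ α} ≤ ENNReal.ofReal α)
    (A : Set Θ) (hA : θ ∉ A) :
    ∀ α ∈ Set.Icc (0:ℝ) 1,
      μ {ω | 1 - α ≤ 1 - ⨆ ϑ : {t // t ∉ A}, π ω ϑ} ≤ ENNReal.ofReal α := by
  intro α hα
  refine le_trans (measure_mono ?_) (hval α hα)
  intro ω hω
  simp only [Set.mem_setOf_eq, sub_le_sub_iff_left] at hω ⊢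
  refine le_trans ?_ hω
  exact le_ciSup (f := fun ϑ : {t // t ∉ A} => π ω ϑ) ⟨1, Set.forall_mem_range.2 fun t => (hrange ω t).2⟩ ⟨θ, hA⟩
end
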